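/- arXiv:2302.14315 — 4 statements merged into one kernel-verified Lean document; each statement's English description precedes it below -/
import Mathlib

section
/- Let C be a GCM of rank 2 with c_{12} c_{21} = 1 (type A_2), with symmetrizer D = diag(d_1, d_2) = diag(d, d). Define operators T_1, T_2 on the free module over ℤ[q^{±1}, t^{±1}, μ^{±1}] with basis α_1, α_2 by T_i α_i = -q^{-2d} t^2 α_i, T_1 α_2 = α_2 + q^{-d} t μ α_1, T_2 α_1 = α_1 + q^{-d} t μ^{-1} α_2. Then T_1 T_2 T_1 = T_2 T_1 T_2. -/
/-- Since `(q^{-d} t μ) (q^{-d} t μ⁻¹) = q^{-2d} t²`, the two deformed reflections have the shape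
below, and for that shape the braid relation is a polynomial identity. -/
theorem Matrix.braid_fin_two_of_mul_eq {R : Type*} [CommRing R] {s x y : R} (h : x * y = s) :
    !![-s, x; 0, 1] * !![1, 0; y, -s] * !![-s, x; 0, 1] =
      !![1, 0; y, -s] * !![-s, x; 0, 1] * !![1, 0; y, -s] := by
  subst h
  simp only [Matrix.mul_fin_two]
  ext i j
  fin_cases i <;> fin_cases j <;>
    simp only [Fin.zero_eta, Fin.mk_one, Matrix.of_apply, Matrix.cons_val', Matrix.cons_val_zero,
      Matrix.cons_val_one, Matrix.empty_val', Matrix.cons_val_fin_one] <;>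
    ring

theorem stmt_4_general {R : Type*} [CommRing R] (q t μ : Rˣ) (d : ℕ) :
    (!![-(((q⁻¹ : Rˣ) : R) ^ (2 * d) * (t : R) ^ 2), ((q⁻¹ : Rˣ) : R) ^ d * (t : R) * (μ : R);
        0, 1] *
     !![(1 : R), 0;
        ((q⁻¹ : Rˣ) : R) ^ d * (t : R) * ((μ⁻¹ : Rˣ) : R),
          -(((q⁻¹ : Rˣ) : R) ^ (2 * d) * (t : R) ^ 2)] *
     !![-(((q⁻¹ : Rˣ) : R) ^ (2 * d) * (t : R) ^ 2), ((q⁻¹ : Rˣ) : R) ^ d * (t : R) * (μ : R);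
        0, 1])
    =
    (!![(1 : R), 0;
        ((q⁻¹ : Rˣ) : R) ^ d * (t : R) * ((μ⁻¹ : Rˣ) : R),
          -(((q⁻¹ : Rˣ) : R) ^ (2 * d) * (t : R) ^ 2)] *
     !![-(((q⁻¹ : Rˣ) : R) ^ (2 * d) * (t : R) ^ 2), ((q⁻¹ : Rˣ) : R) ^ d * (t : R) * (μ : R);
        0, 1] *
     !![(1 : R), 0;
        ((q⁻¹ : Rˣ) : R) ^ d * (t : R) * ((μ⁻¹ : Rˣ) : R),
          -(((q⁻¹ : Rˣ) : R) ^ (2 * d) * (t : R) ^ 2)]) := by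
  apply Matrix.braid_fin_two_of_mul_eq
  calc ((q⁻¹ : Rˣ) : R) ^ d * t * μ * (((q⁻¹ : Rˣ) : R) ^ d * t * ((μ⁻¹ : Rˣ) : R))
      = ((q⁻¹ : Rˣ) : R) ^ (2 * d) * t ^ 2 * (μ * ((μ⁻¹ : Rˣ) : R)) := by ring
    _ = ((q⁻¹ : Rˣ) : R) ^ (2 * d) * t ^ 2 := by rw [Units.mul_inv, mul_one]

/-- Braid relation `T₁T₂T₁ = T₂T₁T₂` in type `A₂` (i.e. `c₁₂ c₂₁ = 1`) with symmetrizer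
`diag(d, d)`, for the deformed reflections `T_i α_i = −q^{-2d} t² α_i`,
`T₁ α₂ = α₂ + q^{-d} t μ α₁`, `T₂ α₁ = α₁ + q^{-d} t μ⁻¹ α₂`, written as matrices in the
basis `(α₁, α₂)`. -/
theorem stmt_4 {R : Type*} [CommRing R] (q t μ : Rˣ) (d : ℕ) (hd : 0 < d) :
    (!![-(((q⁻¹ : Rˣ) : R) ^ (2 * d) * (t : R) ^ 2), ((q⁻¹ : Rˣ) : R) ^ d * (t : R) * (μ : R);
        0, 1] *
     !![(1 : R), 0;
        ((q⁻¹ : Rˣ) : R) ^ d * (t : R) * ((μ⁻¹ : Rˣ) : R),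
          -(((q⁻¹ : Rˣ) : R) ^ (2 * d) * (t : R) ^ 2)] *
     !![-(((q⁻¹ : Rˣ) : R) ^ (2 * d) * (t : R) ^ 2), ((q⁻¹ : Rˣ) : R) ^ d * (t : R) * (μ : R);
        0, 1])
    =
    (!![(1 : R), 0;
        ((q⁻¹ : Rˣ) : R) ^ d * (t : R) * ((μ⁻¹ : Rˣ) : R),
          -(((q⁻¹ : Rˣ) : R) ^ (2 * d) * (t : R) ^ 2)] *
     !![-(((q⁻¹ : Rˣ) : R) ^ (2 * d) * (t : R) ^ 2), ((q⁻¹ : Rˣ) : R) ^ d * (t : R) * (μ : R);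
        0, 1] *
     !![(1 : R), 0;
        ((q⁻¹ : Rˣ) : R) ^ d * (t : R) * ((μ⁻¹ : Rˣ) : R),
          -(((q⁻¹ : Rˣ) : R) ^ (2 * d) * (t : R) ^ 2)]) :=
  stmt_4_general q t μ d
end

section
/- Let C be a GCM with symmetrizer D = diag(d_i), d = gcd(d_i), and r = lcm(d_i). In the free abelian group generated by symbols [ε_i] (i ∈ I) modulo the relations [ε_i]^{f_{ij}} = [ε_j]^{f_{ji}} for all i ∼ j (where f_{ij} = d_j / gcd(d_i,d_j)), if C is irreducible and the group is torsion-free, then [ε_i]^{d_j/d} = [ε_j]^{d_i/d} for all i, j ∈ I. -/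
/-- Let `C` be an irreducible symmetrizable GCM with symmetrizer `diag(d_i)`,
`d = gcd(d_i)`.  In any torsion-free abelian group, elements `e i` (the classes of the
symbols `[ε_i]`) satisfying the relations `f_{ij} • e i = f_{ji} • e j` for all adjacent
`i ∼ j` (with `f_{ij} = d_j / gcd(d_i, d_j)`) also satisfy
`(d_j/d) • e i = (d_i/d) • e j` for all `i, j`. -/
theorem stmt_12 {n : ℕ} (C : Matrix (Fin n) (Fin n) ℤ)
    (hdiag : ∀ i, C i i = 2)
    (hoff : ∀ i j, i ≠ j → C i j ≤ 0)
    (hzero : ∀ i j, C i j = 0 ↔ C j i = 0)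
    (d : Fin n → ℕ) (hd : ∀ i, 0 < d i)
    (hsym : ∀ i j, (d i : ℤ) * C i j = (d j : ℤ) * C j i)
    (hirr : ∀ i j, Relation.ReflTransGen (fun a b => C a b < 0) i j)
    (G : Type*) [AddCommGroup G] [NoZeroSMulDivisors ℤ G]
    (e : Fin n → G)
    (hrel : ∀ i j, C i j < 0 →
      (d j / Nat.gcd (d i) (d j)) • e i = (d i / Nat.gcd (d i) (d j)) • e j) :
    ∀ i j, (d j / Finset.univ.gcd d) • e i = (d i / Finset.univ.gcd d) • e j := by
  intro i j
  set r : ℕ := Finset.univ.lcm d with hr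
  set D : ℕ := Finset.univ.gcd d with hD
  have hdvd_r : ∀ k, d k ∣ r := fun k => Finset.dvd_lcm (Finset.mem_univ k)
  have hD_dvd : ∀ k, D ∣ d k := fun k => Finset.gcd_dvd (Finset.mem_univ k)
  have hDpos : 0 < D := Nat.pos_of_dvd_of_pos (hD_dvd i) (hd i)
  have hrne : r ≠ 0 := by
    intro h
    rw [hr, Finset.lcm_eq_zero_iff] at h
    obtain ⟨k, -, hk⟩ := h
    exact (hd k).ne' hk
  -- key arithmetic: for any a b, (r / lcm a b) * (b / gcd a b) = r / a   (when a,b ∣ r, pos)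
  have keyarith : ∀ a b : Fin n,
      (r / Nat.lcm (d a) (d b)) * (d b / Nat.gcd (d a) (d b)) = r / d a := by
    intro a b
    have hL : Nat.lcm (d a) (d b) ∣ r := Nat.lcm_dvd (hdvd_r a) (hdvd_r b)
    have hLeq : (d b / Nat.gcd (d a) (d b)) * d a = Nat.lcm (d a) (d b) := by
      have hg : Nat.gcd (d a) (d b) ∣ d b := Nat.gcd_dvd_right _ _
      have hgpos : 0 < Nat.gcd (d a) (d b) := Nat.gcd_pos_of_pos_left _ (hd a)
      apply Nat.eq_of_mul_eq_mul_left hgpos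
      rw [← mul_assoc, Nat.mul_div_cancel' hg, Nat.gcd_mul_lcm, Nat.mul_comm]
    symm
    apply Nat.div_eq_of_eq_mul_left (hd a)
    rw [mul_assoc, hLeq, Nat.div_mul_cancel hL]
  -- adjacent step
  have adj : ∀ a b : Fin n, C a b < 0 → (r / d a) • e a = (r / d b) • e b := by
    intro a b hab
    have h1 := hrel a b hab
    calc (r / d a) • e a
        = ((r / Nat.lcm (d a) (d b)) * (d b / Nat.gcd (d a) (d b))) • e a := by
          rw [keyarith a b]
      _ = (r / Nat.lcm (d a) (d b)) • ((d b / Nat.gcd (d a) (d b)) • e a) := by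
          rw [mul_smul]
      _ = (r / Nat.lcm (d a) (d b)) • ((d a / Nat.gcd (d a) (d b)) • e b) := by rw [h1]
      _ = ((r / Nat.lcm (d b) (d a)) * (d a / Nat.gcd (d b) (d a))) • e b := by
          rw [mul_smul, Nat.lcm_comm, Nat.gcd_comm]
      _ = (r / d b) • e b := by rw [keyarith b a]
  -- chain
  have chain : ∀ a b : Fin n, Relation.ReflTransGen (fun x y => C x y < 0) a b →
      (r / d a) • e a = (r / d b) • e b := by
    intro a b h
    induction h with
    | refl => rfl
    | tail _ hbc ih => exact ih.trans (adj _ _ hbc)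
  have hkey : (r / d i) • e i = (r / d j) • e j := chain i j (hirr i j)
  -- extract
  have hmul : ((r * D : ℕ) : ℤ) • ((d j / D) • e i) = ((r * D : ℕ) : ℤ) • ((d i / D) • e j) := by
    have l1 : (r * D) • ((d j / D) • e i) = (d j * d i) • ((r / d i) • e i) := by
      rw [← mul_smul, ← mul_smul]
      congr 1
      rw [mul_assoc, Nat.mul_div_cancel' (hD_dvd j), mul_assoc, Nat.mul_div_cancel' (hdvd_r i),
        Nat.mul_comm]
    have l2 : (r * D) • ((d i / D) • e j) = (d j * d i) • ((r / d j) • e j) := by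
      rw [← mul_smul, ← mul_smul]
      congr 1
      rw [mul_assoc, Nat.mul_div_cancel' (hD_dvd i), Nat.mul_comm (d j) (d i), mul_assoc,
        Nat.mul_div_cancel' (hdvd_r j), Nat.mul_comm]
    rw [natCast_zsmul, natCast_zsmul, l1, l2, hkey]
  have hne : ((r * D : ℕ) : ℤ) ≠ 0 := by
    exact_mod_cast Nat.mul_ne_zero hrne hDpos.ne'
  exact smul_right_injective G hne hmul
end

section
/- Let C be a GCM of rank 2 of type A_1^{(1)}, i.e., C = [[2,-2],[-2,2]], with symmetrizer D = diag(1,1). Write the deformed Cartan matrix as C(q,t,μ) = (Id − tX) t^{-1} q^D over ℤ[Γ₀][t] where Γ₀ = q^ℤ × μ^ℤ. Then all entries of the inverse matrix C̃(q,t,μ) = q^{-D} t (Id + Σ_{k>0} X^k t^k), expanded as formal power series in t, have coefficients in ℤ_{≥0}[Γ₀]. -/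
/-- Monomial `q^{n₀} a^{n₁} b^{n₂}` in the group ring `ℤ[Γ₀]`, `Γ₀ = q^ℤ × a^ℤ × b^ℤ`
(`a = μ₁₂⁽¹⁾`, `b = μ₁₂⁽²⁾`, and `μ₂₁⁽ᵍ⁾` are their inverses). -/
noncomputable def stmt14Mono (v : Fin 3) (m : ℤ) : AddMonoidAlgebra ℤ (Fin 3 →₀ ℤ) :=
  AddMonoidAlgebra.single (Finsupp.single v m) 1

/-- Embedding of `ℤ[Γ₀]` in `ℤ[Γ₀]((t))` at `t`-degree `m`. -/
noncomputable def stmt14T (m : ℤ) (r : AddMonoidAlgebra ℤ (Fin 3 →₀ ℤ)) :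
    LaurentSeries (AddMonoidAlgebra ℤ (Fin 3 →₀ ℤ)) :=
  HahnSeries.single m r

/-- The deformed GCM of type `A₁⁽¹⁾` (`C = [[2,-2],[-2,2]]`, `D = Id`):
diagonal entries `q t⁻¹ + q⁻¹ t`, off-diagonal entries `−(μ₁₂⁽¹⁾ + μ₁₂⁽²⁾)` and
`−(μ₂₁⁽¹⁾ + μ₂₁⁽²⁾)`, as a matrix over `ℤ[Γ₀]((t))`. -/
noncomputable def stmt14C :
    Matrix (Fin 2) (Fin 2) (LaurentSeries (AddMonoidAlgebra ℤ (Fin 3 →₀ ℤ))) :=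
  !![stmt14T (-1) (stmt14Mono 0 1) + stmt14T 1 (stmt14Mono 0 (-1)),
      -(stmt14T 0 (stmt14Mono 1 1 + stmt14Mono 2 1));
    -(stmt14T 0 (stmt14Mono 1 (-1) + stmt14Mono 2 (-1))),
      stmt14T (-1) (stmt14Mono 0 1) + stmt14T 1 (stmt14Mono 0 (-1))]

/-! The determinant of `C` factors as `q² t⁻² (1 - q⁻² μ t²) (1 - q⁻² μ⁻¹ t²)` with
`μ = μ₁₂⁽¹⁾ / μ₁₂⁽²⁾`, so `det⁻¹ = q⁻² t² Σₖ (q⁻² μ t²)ᵏ Σₖ (q⁻² μ⁻¹ t²)ᵏ` has nonnegative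
coefficients. The adjugate of `C` has entries `q t⁻¹ + q⁻¹ t`, `μ₁₂⁽¹⁾ + μ₁₂⁽²⁾` and
`μ₂₁⁽¹⁾ + μ₂₁⁽²⁾` (the minus signs of `C` cancel), so `C⁻¹ = det⁻¹ • adj C` lies in the
subsemiring of Laurent series with coefficients in `ℤ≥0[Γ₀]`. -/

namespace AddMonoidAlgebra

variable (R G : Type*) [Semiring R] [PartialOrder R] [IsOrderedRing R] [AddMonoid G]

def nonneg : Subsemiring R[G] where
  carrier := {f | ∀ g, 0 ≤ f.coeff g}
  mul_mem' {f f'} hf hf' g := by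
    classical
    rw [coeff_mul]
    refine Finset.sum_nonneg fun a _ ↦ Finset.sum_nonneg fun b _ ↦ ?_
    dsimp only
    split_ifs
    exacts [mul_nonneg (hf a) (hf' b), le_rfl]
  one_mem' g := by
    classical
    rw [one_def, coeff_single, Finsupp.single_apply]
    split_ifs <;> simp
  add_mem' hf hf' g := by
    rw [coeff_add, Finsupp.add_apply]
    exact add_nonneg (hf g) (hf' g)
  zero_mem' g := by simp

end AddMonoidAlgebra

namespace HahnSeries

section

variable {Γ R : Type*} [AddCommMonoid Γ] [PartialOrder Γ] [IsOrderedCancelAddMonoid Γ]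
  [Semiring R]

def coeffSubsemiring (S : Subsemiring R) : Subsemiring (HahnSeries Γ R) where
  carrier := {x | ∀ g, x.coeff g ∈ S}
  mul_mem' hx hy g := by
    rw [coeff_mul]
    exact sum_mem fun ij _ ↦ mul_mem (hx ij.1) (hy ij.2)
  one_mem' g := by
    rw [coeff_one]
    split_ifs
    exacts [one_mem S, zero_mem S]
  add_mem' hx hy g := by
    rw [coeff_add]
    exact add_mem (hx g) (hy g)
  zero_mem' g := zero_mem S

theorem SummableFamily.hsum_mem_coeffSubsemiring {S : Subsemiring R} {α : Type*}
    {s : SummableFamily Γ R α} (hs : ∀ i, s i ∈ coeffSubsemiring S) :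
    s.hsum ∈ coeffSubsemiring S := fun g ↦ by
  rw [SummableFamily.coeff_hsum_eq_sum]
  exact sum_mem fun i _ ↦ hs i g

end

theorem SummableFamily.hsum_powers_mem_coeffSubsemiring {Γ R : Type*} [AddCommMonoid Γ]
    [LinearOrder Γ] [IsOrderedCancelAddMonoid Γ] [CommRing R] {S : Subsemiring R}
    {x : HahnSeries Γ R} (hx : x ∈ coeffSubsemiring S) : (powers x).hsum ∈ coeffSubsemiring S :=
  hsum_mem_coeffSubsemiring fun n ↦ by
    rw [powers_toFun]
    split_ifs
    exacts [pow_mem hx n, pow_mem (zero_mem _) n]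

end HahnSeries

theorem sq_add_sub_mul_add_eq_mul {A : Type*} [CommRing A] {Q Q' a a' b b' : A}
    (hQ : Q * Q' = 1) (ha : a * a' = 1) (hb : b * b' = 1) :
    (Q + Q') ^ 2 - (a + b) * (a' + b') =
      Q ^ 2 * ((1 - Q' ^ 2 * a * b') * (1 - Q' ^ 2 * a' * b)) := by
  linear_combination (2 + (Q * Q' + 1) * (a * b' + a' * b) - Q' ^ 2 * (Q * Q' + 1)) * hQ +
    (-1 - Q' ^ 2 * (Q * Q') ^ 2) * ha + (-1 - Q' ^ 2 * (Q * Q') ^ 2 * a * a') * hb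

section AffineA1

open HahnSeries
open scoped AddMonoidAlgebra

variable {R G : Type*} [CommRing R] [AddCommGroup G]

noncomputable def tMonomial (n : ℤ) (g : G) : LaurentSeries R[G] :=
  HahnSeries.single n (AddMonoidAlgebra.single g 1)

theorem tMonomial_mul (m n : ℤ) (g h : G) :
    (tMonomial m g * tMonomial n h : LaurentSeries R[G]) = tMonomial (m + n) (g + h) := by
  simp only [tMonomial, HahnSeries.single_mul_single, AddMonoidAlgebra.single_mul_single, mul_one]

theorem tMonomial_zero_zero : (tMonomial 0 0 : LaurentSeries R[G]) = 1 := by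
  rw [tMonomial, ← AddMonoidAlgebra.one_def, single_zero_one]

theorem tMonomial_mul_eq_one {m n : ℤ} {g h : G} (hmn : m + n = 0) (hgh : g + h = 0) :
    (tMonomial m g * tMonomial n h : LaurentSeries R[G]) = 1 := by
  rw [tMonomial_mul, hmn, hgh, tMonomial_zero_zero]

theorem tMonomial_pow (n : ℤ) (g : G) (k : ℕ) :
    (tMonomial n g ^ k : LaurentSeries R[G]) = tMonomial (k • n) (k • g) := by
  simp only [tMonomial, HahnSeries.single_pow, AddMonoidAlgebra.single_pow, one_pow]

theorem orderTop_tMonomial_pos {n : ℤ} (hn : 0 < n) (g : G) :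
    0 < (tMonomial n g : LaurentSeries R[G]).orderTop :=
  lt_orderTop_single hn

theorem tMonomial_mem_coeffSubsemiring_nonneg [PartialOrder R] [IsOrderedRing R] (n : ℤ) (g : G) :
    (tMonomial n g : LaurentSeries R[G]) ∈ coeffSubsemiring (AddMonoidAlgebra.nonneg R G) :=
  fun m γ ↦ by
    classical
    rw [tMonomial, HahnSeries.coeff_single]
    split_ifs
    · rw [AddMonoidAlgebra.coeff_single, Finsupp.single_apply]
      split_ifs <;> simp
    · simp

variable (R) in
noncomputable def cartanA11 (q a b : G) : Matrix (Fin 2) (Fin 2) (LaurentSeries R[G]) :=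
  !![tMonomial (-1) q + tMonomial 1 (-q), -(tMonomial 0 a + tMonomial 0 b);
    -(tMonomial 0 (-a) + tMonomial 0 (-b)), tMonomial (-1) q + tMonomial 1 (-q)]

theorem det_cartanA11 (q a b : G) :
    (cartanA11 R q a b).det = tMonomial (-2) (2 • q) *
      ((1 - tMonomial 2 (a - b - 2 • q)) * (1 - tMonomial 2 (b - a - 2 • q))) := by
  have hpow : (tMonomial (-1) q ^ 2 : LaurentSeries R[G]) = tMonomial (-2) (2 • q) := by
    rw [tMonomial_pow]; norm_num
  have hu : (tMonomial 1 (-q) ^ 2 * tMonomial 0 a * tMonomial 0 (-b) : LaurentSeries R[G]) =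
      tMonomial 2 (a - b - 2 • q) := by
    rw [tMonomial_pow, tMonomial_mul, tMonomial_mul]
    congr 1
    abel
  have hv : (tMonomial 1 (-q) ^ 2 * tMonomial 0 (-a) * tMonomial 0 b : LaurentSeries R[G]) =
      tMonomial 2 (b - a - 2 • q) := by
    rw [tMonomial_pow, tMonomial_mul, tMonomial_mul]
    congr 1
    abel
  rw [cartanA11, Matrix.det_fin_two_of, ← hpow, ← hu, ← hv]
  linear_combination sq_add_sub_mul_add_eq_mul
    (tMonomial_mul_eq_one (R := R) (neg_add_cancel 1) (add_neg_cancel q))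
    (tMonomial_mul_eq_one (add_zero 0) (add_neg_cancel a))
    (tMonomial_mul_eq_one (add_zero 0) (add_neg_cancel b))

variable [PartialOrder R] [IsOrderedRing R]

theorem exists_nonneg_mul_det_cartanA11_eq_one (q a b : G) :
    ∃ s ∈ coeffSubsemiring (AddMonoidAlgebra.nonneg R G), s * (cartanA11 R q a b).det = 1 := by
  set u : LaurentSeries R[G] := tMonomial 2 (a - b - 2 • q)
  set v : LaurentSeries R[G] := tMonomial 2 (b - a - 2 • q)
  have hu : 0 < u.orderTop := orderTop_tMonomial_pos two_pos _
  have hv : 0 < v.orderTop := orderTop_tMonomial_pos two_pos _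
  refine ⟨tMonomial 2 (-(2 • q)) * (SummableFamily.powers u).hsum *
    (SummableFamily.powers v).hsum, ?_, ?_⟩
  · have hmon := tMonomial_mem_coeffSubsemiring_nonneg (R := R) (G := G)
    exact mul_mem (mul_mem (hmon _ _) (SummableFamily.hsum_powers_mem_coeffSubsemiring
      (hmon _ _))) (SummableFamily.hsum_powers_mem_coeffSubsemiring (hmon _ _))
  · rw [det_cartanA11]
    linear_combination
      (1 - u) * (SummableFamily.powers u).hsum * ((1 - v) * (SummableFamily.powers v).hsum) *
        tMonomial_mul_eq_one (R := R) (add_neg_cancel 2) (neg_add_cancel (2 • q)) +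
      (1 - v) * (SummableFamily.powers v).hsum *
        SummableFamily.one_sub_self_mul_hsum_powers hu +
      SummableFamily.one_sub_self_mul_hsum_powers hv

theorem exists_nonneg_inverse_cartanA11 (q a b : G) :
    ∃ Y, cartanA11 R q a b * Y = 1 ∧ Y * cartanA11 R q a b = 1 ∧
      ∀ i j, Y i j ∈ coeffSubsemiring (AddMonoidAlgebra.nonneg R G) := by
  obtain ⟨s, hs, hsdet⟩ := exists_nonneg_mul_det_cartanA11_eq_one (R := R) q a b
  have hmon := tMonomial_mem_coeffSubsemiring_nonneg (R := R) (G := G)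
  refine ⟨s • (cartanA11 R q a b).adjugate, ?_, ?_, fun i j ↦ ?_⟩
  · rw [Matrix.mul_smul, Matrix.mul_adjugate, smul_smul, hsdet, one_smul]
  · rw [Matrix.smul_mul, Matrix.adjugate_mul, smul_smul, hsdet, one_smul]
  · fin_cases i <;> fin_cases j <;>
      simp only [cartanA11, Matrix.adjugate_fin_two_of, neg_neg, Matrix.smul_apply, smul_eq_mul]
      <;> exact mul_mem hs (add_mem (hmon _ _) (hmon _ _))

end AffineA1

theorem stmt14C_eq_cartanA11 :
    stmt14C = cartanA11 ℤ (Finsupp.single 0 1) (Finsupp.single 1 1) (Finsupp.single 2 1) := by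
  simp only [stmt14C, cartanA11, stmt14T, stmt14Mono, tMonomial, HahnSeries.single_add,
    Finsupp.single_neg]

/-- (Theorem `tCpos` for type `A₁⁽¹⁾`.)  The deformed GCM `C(q,t,μ)` of the infinite
(affine) type `A₁⁽¹⁾` is invertible over `ℤ[Γ₀]((t))` and every coefficient of every entry
of its inverse `C̃(q,t,μ) = q^{-D} t (Id + Σ_{k>0} X^k t^k)` is nonnegative:
`C̃_{ij}(q,t,μ) ∈ ℤ_{≥0}[Γ₀][[t]]`. -/
theorem stmt_14 :
    ∃ Y : Matrix (Fin 2) (Fin 2) (LaurentSeries (AddMonoidAlgebra ℤ (Fin 3 →₀ ℤ))),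
      stmt14C * Y = 1 ∧ Y * stmt14C = 1 ∧
      ∀ (i j : Fin 2) (m : ℤ) (γ : Fin 3 →₀ ℤ), 0 ≤ ((Y i j).coeff m).coeff γ := by
  rw [stmt14C_eq_cartanA11]
  obtain ⟨Y, hCY, hYC, hY⟩ := exists_nonneg_inverse_cartanA11 (R := ℤ)
    (Finsupp.single (0 : Fin 3) (1 : ℤ)) (Finsupp.single 1 1) (Finsupp.single 2 1)
  exact ⟨Y, hCY, hYC, hY⟩
end

section
/- Let C be a GCM of type A_2 (so c_{12} = c_{21} = −1, d_1 = d_2 = 1, Coxeter number h = 3, dual Coxeter number h^∨ = 3, r = 1, i* swaps 1 and 2). With T_i defined on the ℚ(q^{±1}, t^{±1}, μ^{±1})-span of α_1, α_2 by T_i α_i = −q^{-2}t² α_i, T_1 α_2 = α_2 + q^{-1} t μ α_1, T_2 α_1 = α_1 + q^{-1} t μ^{-1} α_2, the longest-element operator satisfies T_1 T_2 T_1 = −q^{-3} t^3 ν, where ν(α_1) = μ^{-1} α_2 and ν(α_2) = μ α_1. -/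
/-- Type `A₂` instance of `T_{w₀} = −q^{-r h^∨} t^h ν`:  with `d₁ = d₂ = 1`, `r = 1`,
`h = h^∨ = 3`, the deformed reflections `T₁, T₂` (as matrices in the basis `(α₁, α₂)`)
satisfy `T₁T₂T₁ = −q^{-3} t³ ν`, where `ν α₁ = μ⁻¹ α₂` and `ν α₂ = μ α₁`. -/
theorem stmt_15 {R : Type*} [CommRing R] (q t μ : Rˣ) :
    (!![-(((q⁻¹ : Rˣ) : R) ^ 2 * (t : R) ^ 2), ((q⁻¹ : Rˣ) : R) * (t : R) * (μ : R); 0, 1] *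
     !![(1 : R), 0;
        ((q⁻¹ : Rˣ) : R) * (t : R) * ((μ⁻¹ : Rˣ) : R),
          -(((q⁻¹ : Rˣ) : R) ^ 2 * (t : R) ^ 2)] *
     !![-(((q⁻¹ : Rˣ) : R) ^ 2 * (t : R) ^ 2), ((q⁻¹ : Rˣ) : R) * (t : R) * (μ : R); 0, 1])
    =
    (-(((q⁻¹ : Rˣ) : R) ^ 3 * (t : R) ^ 3)) •
      !![(0 : R), (μ : R); ((μ⁻¹ : Rˣ) : R), 0] := by
  have h1 : (μ : R) * ((μ⁻¹ : Rˣ) : R) = 1 := by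
    rw [← Units.val_mul, mul_inv_cancel, Units.val_one]
  ext i j
  fin_cases i <;> fin_cases j <;>
      simp [Matrix.mul_apply, Fin.sum_univ_succ]
  · linear_combination (((q⁻¹:Rˣ):R)^4*(t:R)^4) * h1
  · linear_combination (((q⁻¹:Rˣ):R)^3*(t:R)^3*(μ:R)) * h1
  · ring
  · linear_combination (((q⁻¹:Rˣ):R)^2*(t:R)^2) * h1
end
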